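/- Extremality of the virtual itineraries. Let 0 ≤ α < 1 < β, k := ⌈α+β⌉, A := {0,…,k−1}, γ := α+β−k+1. (1) If u ∈ A^ℕ satisfies φ̄_∞^{α,β}(u) = 0, φ̄_∞^{α,β}(σu) = α and u ≼ σⁿu for all n ≥ 1, then u ≼ u^{α,β}. (2) If v ∈ A^ℕ satisfies φ̄_∞^{α,β}(v) = 1, φ̄_∞^{α,β}(σv) = γ and σⁿv ≼ v for all n ≥ 1, then v^{α,β} ≼ v. -/

import Mathlib

open Filter Set

/-- The shift map on one-sided sequences. -/
def shft (x : ℕ → ℕ) : ℕ → ℕ := fun n => x (n + 1)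

/-- Strict lexicographic order on one-sided sequences:
`x ≺ y` iff they differ and `x m < y m` at the first index `m` where they differ. -/
def lexLt (x y : ℕ → ℕ) : Prop := ∃ m, (∀ i, i < m → x i = y i) ∧ x m < y m

/-- Lexicographic order `x ≼ y` on one-sided sequences. -/
def lexLe (x y : ℕ → ℕ) : Prop := x = y ∨ lexLt x y

/-- The map `φ̄^{α,β} : ℝ → [0,1]`:  `0` for `t ≤ α`, `(t-α)/β` for `α ≤ t ≤ α+β`,
`1` for `t ≥ α+β`. -/
noncomputable def phiB (α β t : ℝ) : ℝ :=
  if t ≤ α then 0 else if α + β ≤ t then 1 else (t - α) / β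

/-- `φ̄ₙ^{α,β}(x) = φ̄^{α,β}(x₀ + φ̄^{α,β}(x₁ + ⋯ + φ̄^{α,β}(x_{n-1})⋯))`. -/
noncomputable def phiBN (α β : ℝ) : ℕ → (ℕ → ℕ) → ℝ
  | 0, _ => 0
  | n + 1, x => phiB α β (x 0 + phiBN α β n (shft x))

/-- `φ̄_∞^{α,β}(x) = limₙ φ̄ₙ^{α,β}(x)`; the sequence `φ̄ₙ^{α,β}(x)` is nondecreasing in `n`
and bounded, so its limit is its supremum. -/
noncomputable def phiBInf (α β : ℝ) (x : ℕ → ℕ) : ℝ := ⨆ n, phiBN α β n x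

/-- `T̂_{α,β}(x) = βx + α − ⌊βx + α⌋`. -/
noncomputable def Tlow (α β x : ℝ) : ℝ := β * x + α - ⌊β * x + α⌋

/-- `Ť_{α,β}(x) = βx + α + 1 − ⌈βx + α⌉`. -/
noncomputable def Thigh (α β x : ℝ) : ℝ := β * x + α + 1 - ⌈β * x + α⌉

/-- `k = ⌈α + β⌉`, the size of the alphabet `A = {0, …, k-1}`. -/
noncomputable def kAB (α β : ℝ) : ℕ := (⌈α + β⌉).toNat

/-- The string `u^{α,β}`, the coding of the orbit of `0`:
`u^{α,β}ₙ = ⌊β T̂ⁿ_{α,β}(0) + α⌋`. -/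
noncomputable def uItin (α β : ℝ) : ℕ → ℕ := fun n => (⌊β * (Tlow α β)^[n] 0 + α⌋).toNat

/-- The string `v^{α,β}`, the coding of the orbit of `1`:
`v^{α,β}ₙ = ⌈β Ťⁿ_{α,β}(1) + α⌉ − 1`. -/
noncomputable def vItin (α β : ℝ) : ℕ → ℕ := fun n => (⌈β * (Thigh α β)^[n] 1 + α⌉ - 1).toNat

/-- The shift space `Σ(u,v) = {x ∈ A^ℕ : u ≼ σⁿx ≼ v for all n ≥ 0}`, `A = {0,…,k-1}`. -/
def SigSet (k : ℕ) (u v : ℕ → ℕ) : Set (ℕ → ℕ) :=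
  {x | (∀ i, x i < k) ∧ ∀ n, lexLe u (shft^[n] x) ∧ lexLe (shft^[n] x) v}

/-- The number of words of length `n` in the language of `Σ(u,v)` (prefixes of elements). -/
noncomputable def nWords (k : ℕ) (u v : ℕ → ℕ) (n : ℕ) : ℕ :=
  Nat.card {w : Fin n → ℕ // ∃ x ∈ SigSet k u v, ∀ i : Fin n, x i.1 = w i}

/-- The topological entropy (base 2) of `Σ(u,v)`:
`h = limₙ (1/n) log₂ card(Lₙ)` (the limit exists by subadditivity, so it equals the limsup;
it is `0` when `Σ(u,v) = ∅`). -/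
noncomputable def entS (k : ℕ) (u v : ℕ → ℕ) : ℝ :=
  Filter.limsup (fun n : ℕ => Real.logb 2 (nWords k u v n) / (n : ℝ)) Filter.atTop

/-- Concatenation of the word `w₀ ⋯ w_{p-1}` (the first `p` letters of `w`) with the
string `y`. -/
def wcat (p : ℕ) (w y : ℕ → ℕ) : ℕ → ℕ := fun n => if n < p then w n else y (n - p)

open Topology

/-!
Suppose `u^{α,β} ≺ u`, with first difference at index `m`. Put `xₙ := T̂ⁿ(0)` and
`Aₙ := φ̄_∞(σⁿu)`; then `βxₙ + α = ⌊βxₙ + α⌋ + xₙ₊₁` and `Aₙ = φ̄(uₙ + Aₙ₊₁)`. On `[0, 1)` the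
map `φ̄` inverts `t ↦ βt + α` and is nondecreasing, so `xₙ < Aₙ` propagates backwards from
`n = m`, where the digit of `u` is the larger one, down to `n = 0`, contradicting
`x₀ = 0 = φ̄_∞(u)`. Part (2) is the mirror image under `t ↦ 1 - t`, which turns `φ̄^{α,β}` into
`φ̄^{-α-β,β}` and the digits `d` into `-1 - d`.
-/

lemma lexLe_or_lexLt (x y : ℕ → ℕ) : lexLe x y ∨ lexLt y x := by
  rcases le_or_gt (toLex x) (toLex y) with h | h
  · exact Or.inl ((le_iff_eq_or_lt.1 h).imp (congrArg ofLex) id)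
  · exact Or.inr h

section phiB

variable {α β : ℝ}

lemma phiB_eq_max_min (hβ : 0 < β) (t : ℝ) : phiB α β t = max 0 (min 1 ((t - α) / β)) := by
  unfold phiB
  split_ifs with hleft hright
  · have : (t - α) / β ≤ 0 := div_nonpos_of_nonpos_of_nonneg (by linarith) hβ.le
    simp [this]
  · have : 1 ≤ (t - α) / β := (le_div_iff₀ hβ).2 (by linarith)
    simp [this]
  · have h0 : 0 ≤ (t - α) / β := div_nonneg (by linarith) hβ.le
    have h1 : (t - α) / β ≤ 1 := (div_le_one hβ).2 (by linarith)
    simp [h0, h1]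

lemma phiB_nonneg (hβ : 0 < β) (t : ℝ) : 0 ≤ phiB α β t :=
  (phiB_eq_max_min hβ t).symm ▸ le_max_left _ _

lemma phiB_le_one (hβ : 0 < β) (t : ℝ) : phiB α β t ≤ 1 :=
  (phiB_eq_max_min hβ t).symm ▸ max_le zero_le_one (min_le_left _ _)

lemma phiB_mono (hβ : 0 < β) : Monotone (phiB α β) := fun s t hst => by
  simp only [phiB_eq_max_min hβ]
  gcongr

lemma continuous_phiB (hβ : 0 < β) : Continuous (phiB α β) := by
  simp only [funext (phiB_eq_max_min (α := α) hβ)]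
  fun_prop

lemma phiB_neg (hβ : 0 < β) (t : ℝ) : phiB (-α - β) β (-t) = 1 - phiB α β t := by
  unfold phiB
  split_ifs <;> first | linarith | (field_simp; ring)

lemma lt_phiB_of_mul_add_lt (hβ : 0 < β) {x t : ℝ} (hx : x ∈ Ico 0 1) (h : β * x + α < t) :
    x < phiB α β t := by
  rw [phiB_eq_max_min hβ]
  exact lt_max_of_lt_right (lt_min hx.2 ((lt_div_iff₀ hβ).2 (by linarith)))

end phiB

section phiBInf

variable {α β : ℝ}

lemma phiBN_le_one (hβ : 0 < β) (n : ℕ) (x : ℕ → ℕ) : phiBN α β n x ≤ 1 := by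
  cases n with
  | zero => exact zero_le_one
  | succ n => exact phiB_le_one hβ _

lemma phiBN_le_succ (hβ : 0 < β) (n : ℕ) (x : ℕ → ℕ) : phiBN α β n x ≤ phiBN α β (n + 1) x := by
  induction n generalizing x with
  | zero => exact phiB_nonneg hβ _
  | succ n ih => exact phiB_mono hβ (add_le_add le_rfl (ih (shft x)))

lemma tendsto_phiBN (hβ : 0 < β) (x : ℕ → ℕ) :
    Tendsto (fun n => phiBN α β n x) atTop (𝓝 (phiBInf α β x)) :=
  tendsto_atTop_ciSup (monotone_nat_of_le_succ fun n => phiBN_le_succ hβ n x)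
    ⟨1, by rintro _ ⟨n, rfl⟩; exact phiBN_le_one hβ n x⟩

lemma phiBInf_eq_phiB (hβ : 0 < β) (x : ℕ → ℕ) :
    phiBInf α β x = phiB α β (x 0 + phiBInf α β (shft x)) :=
  tendsto_nhds_unique ((tendsto_phiBN hβ x).comp (tendsto_add_atTop_nat 1))
    (((continuous_phiB hβ).tendsto _).comp ((tendsto_phiBN hβ (shft x)).const_add _))

lemma shft_iterate_apply (x : ℕ → ℕ) (n i : ℕ) : shft^[n] x i = x (n + i) := by
  induction n generalizing i with
  | zero => simp
  | succ n ih =>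
    rw [Function.iterate_succ_apply', shft, ih, Nat.add_right_comm, Nat.add_assoc]

lemma phiBInf_shft_iterate (hβ : 0 < β) (x : ℕ → ℕ) (n : ℕ) :
    phiBInf α β (shft^[n] x) = phiB α β (x n + phiBInf α β (shft^[n + 1] x)) := by
  rw [phiBInf_eq_phiB hβ, shft_iterate_apply, Function.iterate_succ_apply', add_zero]

end phiBInf

section comparison

variable {α β : ℝ} {c d : ℕ → ℤ} {m : ℕ}

theorem lt_of_digits_lt (hβ : 0 < β) {x A : ℕ → ℝ} (hx : ∀ n, x n ∈ Ico 0 1)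
    (hx_succ : ∀ n, β * x n + α = c n + x (n + 1)) (hA : ∀ n, A n = phiB α β (d n + A (n + 1)))
    (hcd : ∀ i < m, c i = d i) (hm : c m < d m) : x 0 < A 0 := by
  have step (n : ℕ) (h : β * x n + α < d n + A (n + 1)) : x n < A n :=
    (hA n).symm ▸ lt_phiB_of_mul_add_lt hβ (hx n) h
  refine Nat.decreasingInduction (motive := fun n _ => x n < A n)
    (fun n hn ih => step n ?_) (step m ?_) m.zero_le
  · rw [hx_succ, hcd n hn]
    linarith
  · have hdigit : (c m : ℝ) + 1 ≤ d m := by exact_mod_cast hm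
    have hA_nonneg : 0 ≤ A (m + 1) := (hA _).symm ▸ phiB_nonneg hβ _
    linarith [hx_succ m, (hx (m + 1)).2]

theorem lt_of_digits_gt (hβ : 0 < β) {y B : ℕ → ℝ} (hy : ∀ n, y n ∈ Ioc 0 1)
    (hy_succ : ∀ n, β * y n + α = c n + y (n + 1)) (hB : ∀ n, B n = phiB α β (d n + B (n + 1)))
    (hcd : ∀ i < m, c i = d i) (hm : d m < c m) : B 0 < y 0 := by
  have := lt_of_digits_lt (α := -α - β) (c := fun n => -1 - c n) (d := fun n => -1 - d n)
    (x := fun n => 1 - y n) (A := fun n => 1 - B n) (m := m) hβ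
    (fun n => ⟨by linarith [(hy n).2], by linarith [(hy n).1]⟩)
    (fun n => by push_cast; linarith [hy_succ n])
    (fun n => by rw [hB n, ← phiB_neg hβ]; push_cast; ring_nf)
    (fun i hi => by rw [hcd i hi]) (by omega)
  linarith

end comparison

section itineraries

variable {α β : ℝ}

lemma Tlow_iterate_mem_Ico (n : ℕ) : (Tlow α β)^[n] 0 ∈ Ico 0 1 := by
  cases n with
  | zero => simp
  | succ n =>
    rw [Function.iterate_succ_apply']
    exact ⟨Int.fract_nonneg _, Int.fract_lt_one _⟩

lemma Thigh_iterate_mem_Ioc (n : ℕ) : (Thigh α β)^[n] 1 ∈ Ioc 0 1 := by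
  cases n with
  | zero => simp
  | succ n =>
    rw [Function.iterate_succ_apply', Thigh]
    constructor <;> linarith [Int.ceil_lt_add_one (β * (Thigh α β)^[n] 1 + α),
      Int.le_ceil (β * (Thigh α β)^[n] 1 + α)]

lemma uItin_eq_floor (hα : 0 ≤ α) (hβ : 0 ≤ β) (n : ℕ) :
    (uItin α β n : ℤ) = ⌊β * (Tlow α β)^[n] 0 + α⌋ :=
  Int.toNat_of_nonneg <| Int.floor_nonneg.2 <| by
    have := (Tlow_iterate_mem_Ico (α := α) (β := β) n).1
    positivity

lemma vItin_eq_ceil_sub_one (hα : 0 ≤ α) (hβ : 0 < β) (n : ℕ) :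
    (vItin α β n : ℤ) = ⌈β * (Thigh α β)^[n] 1 + α⌉ - 1 :=
  Int.toNat_of_nonneg <| Int.sub_nonneg_of_le <| Int.one_le_ceil_iff.2 <| by
    have := (Thigh_iterate_mem_Ioc (α := α) (β := β) n).1
    positivity

theorem lexLe_uItin (hα : 0 ≤ α) (hβ : 0 < β) {u : ℕ → ℕ} (hu : phiBInf α β u = 0) :
    lexLe u (uItin α β) := by
  refine (lexLe_or_lexLt u (uItin α β)).resolve_right ?_
  rintro ⟨m, hagree, hlt⟩
  have := lt_of_digits_lt (α := α)
    (c := fun n => ⌊β * (Tlow α β)^[n] 0 + α⌋) (d := fun n => (u n : ℤ))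
    (x := fun n => (Tlow α β)^[n] 0) (A := fun n => phiBInf α β (shft^[n] u))
    hβ Tlow_iterate_mem_Ico
    (fun n => by rw [Function.iterate_succ_apply']; exact (Int.floor_add_fract _).symm)
    (fun n => by simpa using phiBInf_shft_iterate hβ u n)
    (fun i hi => by rw [← uItin_eq_floor hα hβ.le, hagree i hi])
    (by rw [← uItin_eq_floor hα hβ.le]; exact_mod_cast hlt)
  simp [hu] at this

theorem vItin_lexLe (hα : 0 ≤ α) (hβ : 0 < β) {v : ℕ → ℕ} (hv : phiBInf α β v = 1) :
    lexLe (vItin α β) v := by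
  refine (lexLe_or_lexLt (vItin α β) v).resolve_right ?_
  rintro ⟨m, hagree, hlt⟩
  have := lt_of_digits_gt (α := α)
    (c := fun n => ⌈β * (Thigh α β)^[n] 1 + α⌉ - 1) (d := fun n => (v n : ℤ))
    (y := fun n => (Thigh α β)^[n] 1) (B := fun n => phiBInf α β (shft^[n] v))
    hβ Thigh_iterate_mem_Ioc
    (fun n => by rw [Function.iterate_succ_apply', Thigh]; push_cast; ring)
    (fun n => by simpa using phiBInf_shft_iterate hβ v n)
    (fun i hi => by rw [← vItin_eq_ceil_sub_one hα hβ, hagree i hi])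
    (by rw [← vItin_eq_ceil_sub_one hα hβ]; exact_mod_cast hlt)
  simp [hv] at this

end itineraries

theorem extremality_of_itineraries_general (α β : ℝ) (hα0 : 0 ≤ α) (hβ : 1 < β) :
    (∀ u : ℕ → ℕ, (∀ i, u i < kAB α β) →
      phiBInf α β u = 0 → phiBInf α β (shft u) = α →
      (∀ n, 1 ≤ n → lexLe u (shft^[n] u)) →
      lexLe u (uItin α β)) ∧
    (∀ v : ℕ → ℕ, (∀ i, v i < kAB α β) →
      phiBInf α β v = 1 → phiBInf α β (shft v) = α + β - kAB α β + 1 →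
      (∀ n, 1 ≤ n → lexLe (shft^[n] v) v) →
      lexLe (vItin α β) v) :=
  ⟨fun _ _ hu _ _ => lexLe_uItin hα0 (zero_lt_one.trans hβ) hu,
    fun _ _ hv _ _ => vItin_lexLe hα0 (zero_lt_one.trans hβ) hv⟩

/-- **Extremality of the virtual itineraries.** Let `0 ≤ α < 1 < β`, `k = ⌈α+β⌉`,
`γ = α+β−k+1`. (1) If `u ∈ A^ℕ` satisfies `φ̄_∞^{α,β}(u) = 0`, `φ̄_∞^{α,β}(σu) = α`
and `u ≼ σⁿu` for all `n ≥ 1`, then `u ≼ u^{α,β}`. (2) If `v ∈ A^ℕ` satisfies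
`φ̄_∞^{α,β}(v) = 1`, `φ̄_∞^{α,β}(σv) = γ` and `σⁿv ≼ v` for all `n ≥ 1`, then
`v^{α,β} ≼ v`. -/
theorem extremality_of_itineraries (α β : ℝ) (hα0 : 0 ≤ α) (hα1 : α < 1) (hβ : 1 < β) :
    (∀ u : ℕ → ℕ, (∀ i, u i < kAB α β) →
      phiBInf α β u = 0 → phiBInf α β (shft u) = α →
      (∀ n, 1 ≤ n → lexLe u (shft^[n] u)) →
      lexLe u (uItin α β)) ∧
    (∀ v : ℕ → ℕ, (∀ i, v i < kAB α β) →
      phiBInf α β v = 1 → phiBInf α β (shft v) = α + β - kAB α β + 1 →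
      (∀ n, 1 ≤ n → lexLe (shft^[n] v) v) →
      lexLe (vItin α β) v) :=
  extremality_of_itineraries_general α β hα0 hβ
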